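/- arXiv:1308.5256 — 5 statements merged into one kernel-verified Lean document; each statement's English description precedes it below -/
import Mathlib

section
/- Let y_1,...,y_N ∈ ℝ^L and define C ∈ ℝ^{NL×NL} by C_{(i,k);(j,l)} = ⟨R_{-k} y_i, R_{-l} y_j⟩. Then the nonzero eigenvalues of C are exactly λ_k = L · Σ_{i=1}^N |F(y_i, k)|² for k ∈ ℤ_L (counted over those k for which λ_k > 0), where F denotes the (unitary) discrete Fourier transform. -/
/-!
Write `C = A Aᵀ`, where the rows of `A` are the cyclic shifts of the `yᵢ`. The nonzero spectra
of `A Aᵀ` and `Aᵀ A` agree (compare characteristic polynomials), and `Aᵀ A` is the circulant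
matrix generated by the summed autocorrelation `Σᵢ yᵢ ∗ yᵢ(-·)`. The discrete Fourier transform
diagonalises every circulant matrix, so its spectrum is the range of the transform of the
generating vector, here `k ↦ Σᵢ |𝓕 yᵢ k|² = λ_k`, and its trace is the sum of these values.
-/

open Finset

/-- Unitary discrete Fourier transform of a real vector. -/
noncomputable def dftR {L : ℕ} [NeZero L] (x : ZMod L → ℝ) (k : ZMod L) : ℂ :=
  (1 / Real.sqrt L) * ∑ j : ZMod L, (x j : ℂ) *
    Complex.exp (-(2 * (Real.pi : ℂ) * Complex.I * (j.val : ℂ) * (k.val : ℂ) / (L : ℂ)))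

namespace Matrix

open Polynomial

variable {m n K : Type*} [Fintype m] [Fintype n] [DecidableEq m] [DecidableEq n] [Field K]

theorem mem_spectrum_mul_comm {A : Matrix m n K} {B : Matrix n m K} {μ : K} (hμ : μ ≠ 0) :
    μ ∈ spectrum K (A * B) ↔ μ ∈ spectrum K (B * A) := by
  have h := congrArg (eval μ) (charpoly_mul_comm' A B)
  simp only [eval_mul, eval_pow, eval_X] at h
  rw [mem_spectrum_iff_isRoot_charpoly, mem_spectrum_iff_isRoot_charpoly, IsRoot.def, IsRoot.def,
    ← mul_eq_zero_iff_left (pow_ne_zero (Fintype.card n) hμ), h,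
    mul_eq_zero_iff_left (pow_ne_zero _ hμ)]

theorem map_mem_spectrum_map_iff {L : Type*} [Field L] (f : K →+* L) (M : Matrix n n K) (μ : K) :
    f μ ∈ spectrum L (M.map f) ↔ μ ∈ spectrum K M := by
  rw [mem_spectrum_iff_isRoot_charpoly, mem_spectrum_iff_isRoot_charpoly, charpoly_map,
    IsRoot.def, IsRoot.def, eval_map, eval₂_hom, map_eq_zero]

end Matrix

namespace ZMod

open Matrix

variable {L : ℕ} [NeZero L]

theorem dft_circulant_mulVec (c v : ZMod L → ℂ) : 𝓕 (circulant c *ᵥ v) = 𝓕 c * 𝓕 v := by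
  ext k
  simp only [dft_apply, Pi.mul_apply, mulVec, dotProduct, circulant_apply, smul_eq_mul,
    Finset.mul_sum, Finset.sum_mul]
  rw [Finset.sum_comm]
  refine Finset.sum_congr rfl fun s _ => ?_
  rw [← Equiv.sum_comp (Equiv.addRight s)]
  refine Finset.sum_congr rfl fun d _ => ?_
  simp only [Equiv.coe_addRight, add_sub_cancel_right, add_mul, neg_add, AddChar.map_add_eq_mul]
  ring

theorem spectrum_circulant (c : ZMod L → ℂ) : spectrum ℂ (circulant c) = Set.range (𝓕 c) := by
  have h : (dft.conjAlgEquiv ℂ) (toLin' (circulant c)) = toLin' (diagonal (𝓕 c)) := by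
    refine LinearMap.ext fun v => ?_
    ext k
    simp [LinearEquiv.conjAlgEquiv_apply, dft_circulant_mulVec, mulVec_diagonal]
  rw [← spectrum_toLin', ← AlgEquiv.spectrum_eq (dft.conjAlgEquiv ℂ), h, spectrum_toLin',
    spectrum_diagonal]

theorem trace_circulant (c : ZMod L → ℂ) : trace (circulant c) = ∑ k, 𝓕 c k := by
  rw [← dft_apply_zero, dft_dft]
  simp [trace, circulant_apply, ZMod.card]

theorem dft_ofReal_neg (x : ZMod L → ℝ) (k : ZMod L) :
    𝓕 (fun j ↦ (x j : ℂ)) (-k) = starRingEnd ℂ (𝓕 (fun j ↦ (x j : ℂ)) k) := by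
  simp only [dft_apply, map_sum, smul_eq_mul, map_mul, Complex.conj_ofReal]
  refine Finset.sum_congr rfl fun j _ => ?_
  rw [mul_neg, stdAddChar_apply, stdAddChar_apply, ← Circle.coe_inv_eq_conj,
    ← AddChar.map_neg_eq_inv]

theorem stdAddChar_neg_mul (j k : ZMod L) :
    stdAddChar (-(j * k)) =
      Complex.exp (-(2 * (Real.pi : ℂ) * Complex.I * (j.val : ℂ) * (k.val : ℂ) / (L : ℂ))) := by
  have h : (-(j * k) : ZMod L) = ((-(j.val * k.val : ℤ) : ℤ) : ZMod L) := by
    push_cast [ZMod.natCast_zmod_val]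
    ring
  rw [h, stdAddChar_coe]
  congr 1
  push_cast
  ring

theorem dft_circulant_mulVec_comp_neg_ofReal (x : ZMod L → ℝ) (k : ZMod L) :
    𝓕 (circulant (fun j ↦ (x j : ℂ)) *ᵥ fun j ↦ (x (-j) : ℂ)) k
      = ((‖𝓕 (fun j ↦ (x j : ℂ)) k‖ ^ 2 : ℝ) : ℂ) := by
  simp only [dft_circulant_mulVec, Pi.mul_apply, dft_comp_neg (fun j ↦ (x j : ℂ)),
    dft_ofReal_neg, Complex.mul_conj']
  push_cast
  rfl

end ZMod

open Matrix ZMod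

section

variable {L : ℕ} [NeZero L]

theorem dftR_eq_dft (x : ZMod L → ℝ) (k : ZMod L) :
    dftR x k = (Real.sqrt L : ℂ)⁻¹ * 𝓕 (fun j ↦ (x j : ℂ)) k := by
  simp only [dftR, dft_apply, stdAddChar_neg_mul, smul_eq_mul, one_div]
  exact congrArg _ (Finset.sum_congr rfl fun j _ => mul_comm _ _)

theorem mul_norm_dftR_sq (x : ZMod L → ℝ) (k : ZMod L) :
    L * ‖dftR x k‖ ^ 2 = ‖𝓕 (fun j ↦ (x j : ℂ)) k‖ ^ 2 := by
  rw [dftR_eq_dft, norm_mul, mul_pow, norm_inv, Complex.norm_real, Real.norm_eq_abs,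
    abs_of_nonneg (Real.sqrt_nonneg _), inv_pow, Real.sq_sqrt (Nat.cast_nonneg L),
    mul_inv_cancel_left₀ (Nat.cast_ne_zero.mpr (NeZero.ne L))]

-- Row `(i, k)` is the shifted observation `R_{-k} yᵢ`.
def shiftMatrix {ι : Type*} (y : ι → ZMod L → ℝ) : Matrix (ι × ZMod L) (ZMod L) ℝ :=
  of fun p t ↦ y p.1 (t + p.2)

theorem map_transpose_shiftMatrix_mul {ι : Type*} [Fintype ι] (y : ι → ZMod L → ℝ) :
    ((shiftMatrix y)ᵀ * shiftMatrix y).map ((↑) : ℝ → ℂ)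
      = circulant (∑ i, circulant (fun j ↦ (y i j : ℂ)) *ᵥ fun j ↦ (y i (-j) : ℂ)) := by
  ext t s
  simp only [map_apply, mul_apply, transpose_apply, shiftMatrix, of_apply, circulant_apply,
    Finset.sum_apply, mulVec, dotProduct, Fintype.sum_prod_type]
  push_cast
  refine Finset.sum_congr rfl fun i _ => ?_
  -- substituting `u = -k - s` turns the correlation `Σₖ yᵢ(t+k) yᵢ(s+k)` into a convolution
  rw [← Equiv.sum_comp ((Equiv.neg _).trans (Equiv.subRight s))]
  refine Finset.sum_congr rfl fun k _ => ?_
  simp only [Equiv.trans_apply, Equiv.neg_apply, Equiv.subRight_apply]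
  rw [show t + (-k - s) = t - s - k by abel, show s + (-k - s) = -k by abel]

end

/-- the nonzero eigenvalues of the shift Gram matrix `C` are exactly
the numbers `λ_k = L ⬝ Σᵢ |F(yᵢ,k)|²`, `k ∈ ℤ_L`; in particular `tr C = Σ_k λ_k`. -/
theorem stmt2 (N L : ℕ) [NeZero L] (y : Fin N → ZMod L → ℝ)
    (C : Matrix (Fin N × ZMod L) (Fin N × ZMod L) ℝ)
    (hC : ∀ i j : Fin N, ∀ k l : ZMod L,
      C (i, k) (j, l) = ∑ t : ZMod L, y i (t + k) * y j (t + l))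
    (lam : ZMod L → ℝ)
    (hlam : ∀ k : ZMod L, lam k = L * ∑ i : Fin N, ‖dftR (y i) k‖ ^ 2) :
    ({μ : ℝ | μ ≠ 0 ∧ μ ∈ spectrum ℝ C} = {μ : ℝ | μ ≠ 0 ∧ ∃ k : ZMod L, μ = lam k})
      ∧ C.trace = ∑ k : ZMod L, lam k := by
  set A := shiftMatrix y
  have hCA : C = A * Aᵀ := by
    ext ⟨i, k⟩ ⟨j, l⟩
    simp [hC, A, shiftMatrix, mul_apply]
  set c : ZMod L → ℂ := ∑ i, circulant (fun j ↦ (y i j : ℂ)) *ᵥ fun j ↦ (y i (-j) : ℂ)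
  have hG : (Aᵀ * A).map Complex.ofRealHom = circulant c := map_transpose_shiftMatrix_mul y
  have hc : 𝓕 c = fun k ↦ (lam k : ℂ) := by
    ext k
    simp [c, map_sum, dft_circulant_mulVec_comp_neg_ofReal, hlam, Finset.mul_sum,
      mul_norm_dftR_sq]
  constructor
  · ext μ
    refine and_congr_right fun hμ => ?_
    rw [hCA, mem_spectrum_mul_comm hμ, ← map_mem_spectrum_map_iff Complex.ofRealHom, hG,
      spectrum_circulant, hc]
    simp [eq_comm]
  · apply Complex.ofReal_injective
    rw [hCA, trace_mul_comm, ← Complex.ofRealHom_eq_coe, AddMonoidHom.map_trace, hG,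
      trace_circulant, hc, Complex.ofReal_sum]
end

section
/- Let u ∈ ℝ^{NL} with entries u_{ik} for i ∈ [N], k ∈ ℤ_L. Suppose that for all i,j ∈ [N]: Σ_{k,l ∈ ℤ_L} u_{ik} u_{jl} = 1; u_{ik} u_{il} = 0 for all k ≠ l; and u_{ik} u_{jl} ≥ 0 for all k,l. Then either u or −u takes values in {0,1}, and for each i there is exactly one k with u_{ik} ≠ 0 (with that entry equal to ±1). -/
open Finset

/-- a vector `u ∈ ℝ^{NL}` satisfying the quadratic constraints of the
integer programming formulation is, up to a global sign, a concatenation of `N`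
standard basis (indicator) vectors: either `u` or `-u` is `{0,1}`-valued, and for
each `i` there is exactly one `k` with `u i k ≠ 0`, that entry being `±1`. -/
theorem stmt4 (N L : ℕ) [NeZero L] (u : Fin N → ZMod L → ℝ)
    (h1 : ∀ i j : Fin N, ∑ k : ZMod L, ∑ l : ZMod L, u i k * u j l = 1)
    (h2 : ∀ i : Fin N, ∀ k l : ZMod L, k ≠ l → u i k * u i l = 0)
    (h3 : ∀ i j : Fin N, ∀ k l : ZMod L, 0 ≤ u i k * u j l) :
    ((∀ i k, u i k = 0 ∨ u i k = 1) ∨ (∀ i k, u i k = 0 ∨ u i k = -1))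
      ∧ (∀ i : Fin N, ∃! k : ZMod L, u i k ≠ 0)
      ∧ (∀ i k, u i k ≠ 0 → u i k = 1 ∨ u i k = -1) := by
  set s : Fin N → ℝ := fun i => ∑ k, u i k with hs
  have hss : ∀ i j, s i * s j = 1 := by
    intro i j
    have h := h1 i j
    rw [hs]
    simpa [Finset.sum_mul_sum] using h
  have huniq : ∀ i (k l : ZMod L), u i k ≠ 0 → u i l ≠ 0 → k = l := by
    intro i k l hk hl
    by_contra hkl
    exact mul_ne_zero hk hl (h2 i k l hkl)
  have hval : ∀ i k, u i k ≠ 0 → u i k = s i := by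
    intro i k hk
    rw [hs]
    refine (Finset.sum_eq_single k ?_ (by simp)).symm
    intro l _ hlk
    by_contra hl
    exact hlk (huniq i l k hl hk)
  have hex : ∀ i, ∃ k, u i k ≠ 0 := by
    intro i
    by_contra h
    push_neg at h
    have : s i = 0 := by rw [hs]; simp [h]
    have h11 := hss i i
    rw [this] at h11
    norm_num at h11
  have hsign : ∀ i, s i = 1 ∨ s i = -1 := fun i => mul_self_eq_one_iff.mp (hss i i)
  refine ⟨?_, ?_, ?_⟩
  · by_cases hneg : ∃ i, s i = -1
    · obtain ⟨i0, hi0⟩ := hneg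
      right
      intro i k
      by_cases hk : u i k = 0
      · exact Or.inl hk
      · refine Or.inr ?_
        have h1' := hss i0 i
        rw [hi0] at h1'
        have : s i = -1 := by linarith
        rw [hval i k hk, this]
    · left
      intro i k
      by_cases hk : u i k = 0
      · exact Or.inl hk
      · push_neg at hneg
        have : s i = 1 := (hsign i).resolve_right (hneg i)
        exact Or.inr (by rw [hval i k hk, this])
  · intro i
    obtain ⟨k, hk⟩ := hex i
    exact ⟨k, hk, fun l hl => huniq i l k hl hk⟩
  · intro i k hk
    rw [hval i k hk]
    exact hsign i
end

section
/- Let V ∈ ℝ^{NL×NL} be indexed by pairs (i,k) with i ∈ [N], k ∈ ℤ_L, and suppose V is block circulant in the shift index: V_{(i,k);(j,l)} depends only on i, j, and (l−k) mod L. Let P = (DFT_L ⊗ I_N) P_0^T be the block-DFT conjugation (P_0 a suitable permutation). Write P V P* = diag(V_0,...,V_{L-1}) with V_k ∈ ℂ^{N×N}. Then the constraints (V real, V ⪰ 0, V_{(i,k);(i,l)} = 0 for k ≠ l with V_{(i,k);(i,k)} = 1/L, and Σ_{k,l} V_{(i,k);(j,l)} = 1) are respectively equivalent to: V_k = conj(V_{L−k})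 for all k; V_k ⪰ 0 for all k; (V_k)_{ii} = 1/L for all k,i; and (V_0)_{ij} = 1/L for all i,j. -/
/-!
Write `g_{ij}(m) = V_{(i,0);(j,m)}` for the first block row, so that `V_k` is the Fourier
transform of `g` on `ZMod L`. For positivity, the matrices `E_k` with columns
`e_j ⊗ (e^{2πikm/L})_m` block-diagonalise `V`: `E_kᴴ V E_k = L V_k` and
`Σ_k E_k V_k E_kᴴ = L V`, and congruence preserves positive semidefiniteness. The other three
constraints only involve `g`, and the DFT is injective: realness of `g` corresponds to
`V_k = conj V_{-k}`, `g_{ii} = δ_0 / L` to `(V_k)_{ii} = 1/L`, and the block sums `L Σ_m g(m)`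
to `L (V_0)_{ij}`.
-/

open Finset Matrix ZMod
open scoped ComplexOrder

namespace ZMod

variable {L : ℕ} [NeZero L]

lemma star_stdAddChar (x : ZMod L) : star (stdAddChar x) = stdAddChar (-x) := by
  rw [stdAddChar_apply, stdAddChar_apply, AddChar.map_neg_eq_inv, Circle.coe_inv_eq_conj]
  rfl

lemma stdAddChar_mul_val (k m : ZMod L) :
    stdAddChar (k * m) =
      Complex.exp (2 * (Real.pi : ℂ) * Complex.I * (k.val : ℂ) * (m.val : ℂ) / (L : ℂ)) := by
  rw [show k * m = ((k.val * m.val : ℕ) : ℤ) by simp, stdAddChar_coe]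
  push_cast
  ring_nf

lemma dft_neg_apply (Φ : ZMod L → ℂ) (k : ZMod L) :
    𝓕 Φ (-k) = ∑ m, stdAddChar (k * m) * Φ m := by
  simp only [dft_apply, mul_neg, neg_neg, smul_eq_mul, mul_comm]

lemma star_dft (Φ : ZMod L → ℂ) (k : ZMod L) : star (𝓕 Φ k) = 𝓕 (star Φ) (-k) := by
  simp only [dft_apply, star_sum, smul_eq_mul, star_mul', star_stdAddChar, mul_neg, neg_neg,
    Pi.star_apply]

lemma dft_single_zero (c : ℂ) (k : ZMod L) : 𝓕 (Pi.single 0 c) k = c := by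
  simp [dft_apply, Pi.single_apply]

lemma forall_dft_neg_eq_iff {Φ Ψ : ZMod L → ℂ} : (∀ k, 𝓕 Φ (-k) = 𝓕 Ψ (-k)) ↔ Φ = Ψ := by
  refine ⟨fun h => dft.injective (funext fun k => by simpa using h (-k)), ?_⟩
  rintro rfl _
  rfl

end ZMod

namespace Matrix

variable {n α : Type*} {L : ℕ}

def IsBlockCirculant (V : Matrix (n × ZMod L) (n × ZMod L) α) : Prop :=
  ∀ i j k l, V (i, k) (j, l) = V (i, 0) (j, l - k)

namespace IsBlockCirculant

variable {V : Matrix (n × ZMod L) (n × ZMod L) α}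

lemma forall_iff (hV : IsBlockCirculant V) (P : α → Prop) :
    (∀ p q, P (V p q)) ↔ ∀ i j m, P (V (i, 0) (j, m)) :=
  ⟨fun h i j m => h (i, 0) (j, m), fun h ⟨i, k⟩ ⟨j, l⟩ => hV i j k l ▸ h i j (l - k)⟩

lemma diag_iff [Zero α] (hV : IsBlockCirculant V) (c : α) :
    (∀ i k l, (k ≠ l → V (i, k) (i, l) = 0) ∧ V (i, k) (i, k) = c) ↔
      ∀ i, (fun m => V (i, 0) (i, m)) = Pi.single 0 c := by
  refine ⟨fun h i => funext fun m => ?_, fun h i k l => ?_⟩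
  · rcases eq_or_ne m 0 with rfl | hm
    · simpa using (h i 0 0).2
    · simpa [hm] using (h i 0 m).1 hm.symm
  · simp only [hV i i k l, hV i i k k, sub_self, congrFun (h i), Pi.single_apply, sub_eq_zero]
    exact ⟨fun hkl => if_neg hkl.symm, if_pos trivial⟩

lemma sum_row_eq [AddCommMonoid α] [NeZero L] (hV : IsBlockCirculant V) (i j : n)
    (k : ZMod L) :
    ∑ l, V (i, k) (j, l) = ∑ m, V (i, 0) (j, m) := by
  simp only [hV i j k]
  exact (Equiv.subRight k).sum_comp fun m => V (i, 0) (j, m)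

lemma sum_sum_eq [AddCommMonoid α] [NeZero L] (hV : IsBlockCirculant V) (i j : n) :
    ∑ k, ∑ l, V (i, k) (j, l) = L • ∑ m, V (i, 0) (j, m) := by
  simp only [hV.sum_row_eq, sum_const, card_univ, ZMod.card]

end IsBlockCirculant

section Fourier

variable [NeZero L]

-- Mathlib's `𝓕` has kernel `e^{-2πi jk/L}`, so the paper's `V_k` is its value at `-k`.
noncomputable def fourierBlock (V : Matrix (n × ZMod L) (n × ZMod L) ℂ) (k : ZMod L) :
    Matrix n n ℂ :=
  of fun i j => 𝓕 (fun m => V (i, 0) (j, m)) (-k)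

variable (V : Matrix (n × ZMod L) (n × ZMod L) ℂ)

lemma fourierBlock_apply (k : ZMod L) (i j : n) :
    fourierBlock V k i j = ∑ m, stdAddChar (k * m) * V (i, 0) (j, m) :=
  dft_neg_apply _ _

lemma fourierBlock_zero_apply (i j : n) : fourierBlock V 0 i j = ∑ m, V (i, 0) (j, m) := by
  simp [fourierBlock, dft_apply_zero]

lemma fourierBlock_eq_star_neg_iff :
    (∀ k i j, fourierBlock V k i j = star (fourierBlock V (-k) i j)) ↔
      ∀ i j m, star (V (i, 0) (j, m)) = V (i, 0) (j, m) := by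
  simp only [fourierBlock, of_apply, neg_neg, star_dft]
  rw [forall_comm]
  refine forall_congr' fun i => ?_
  rw [forall_comm]
  refine forall_congr' fun j => ?_
  rw [forall_dft_neg_eq_iff, funext_iff]
  exact forall_congr' fun _ => eq_comm

lemma fourierBlock_diag_iff (c : ℂ) :
    (∀ k i, fourierBlock V k i i = c) ↔ ∀ i, (fun m => V (i, 0) (i, m)) = Pi.single 0 c := by
  rw [forall_comm]
  refine forall_congr' fun i => ?_
  simpa only [fourierBlock, of_apply, dft_single_zero] using
    forall_dft_neg_eq_iff (Φ := fun m => V (i, 0) (i, m)) (Ψ := Pi.single 0 c)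

noncomputable def fourierEmbedding (n : Type*) [DecidableEq n] (k : ZMod L) :
    Matrix (n × ZMod L) n ℂ :=
  of fun p j => if p.1 = j then stdAddChar (k * p.2) else 0

variable [DecidableEq n] [Fintype n] {V}

lemma conjTranspose_fourierEmbedding_mul_mul (hV : IsBlockCirculant V) (k : ZMod L) :
    (fourierEmbedding n k)ᴴ * V * fourierEmbedding n k = (L : ℂ) • fourierBlock V k := by
  ext i j
  simp only [mul_apply, conjTranspose_apply, fourierEmbedding, of_apply, Fintype.sum_prod_type,
    apply_ite star, star_zero, ite_mul, zero_mul, mul_ite, mul_zero, sum_ite_eq', mem_univ, if_true,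
    sum_mul, sum_ite_irrel, sum_const_zero, smul_apply, smul_eq_mul]
  rw [sum_comm]
  calc _ = ∑ a : ZMod L, ∑ b, stdAddChar (k * (b - a)) * V (i, 0) (j, b - a) := by
        refine sum_congr rfl fun a _ => sum_congr rfl fun b _ => ?_
        rw [hV, star_stdAddChar, mul_sub, sub_eq_add_neg (k * b), AddChar.map_add_eq_mul]
        ring
    _ = ∑ _a : ZMod L, fourierBlock V k i j := by
        refine sum_congr rfl fun a _ => ?_
        rw [fourierBlock_apply]
        exact (Equiv.subRight a).sum_comp fun m => stdAddChar (k * m) * V (i, 0) (j, m)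
    _ = _ := by simp

lemma sum_fourierEmbedding_mul_mul (hV : IsBlockCirculant V) :
    ∑ k, fourierEmbedding n k * fourierBlock V k * (fourierEmbedding n k)ᴴ = (L : ℂ) • V := by
  ext ⟨i, a⟩ ⟨j, b⟩
  simp only [sum_apply, mul_apply, conjTranspose_apply, fourierEmbedding, of_apply,
    apply_ite star, star_zero, ite_mul, zero_mul, mul_ite, mul_zero, sum_ite_eq, mem_univ, if_true,
    smul_apply, smul_eq_mul]
  calc _ = ∑ k, stdAddChar (-(k * (b - a))) • 𝓕 (fun m => V (i, 0) (j, m)) (-k) := by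
        refine sum_congr rfl fun k _ => ?_
        rw [star_stdAddChar, smul_eq_mul, show -(k * (b - a)) = k * a + -(k * b) by ring,
          AddChar.map_add_eq_mul, fourierBlock, of_apply]
        ring
    _ = 𝓕 (fun k => 𝓕 (fun m => V (i, 0) (j, m)) (-k)) (b - a) := (dft_apply _ _).symm
    _ = _ := by simp only [dft_comp_neg, dft_dft, neg_neg, smul_eq_mul, hV i j a b]

lemma IsBlockCirculant.posSemidef_iff (hV : IsBlockCirculant V) :
    V.PosSemidef ↔ ∀ k, (fourierBlock V k).PosSemidef := by
  have hL : (L : ℂ)⁻¹ * L = 1 := inv_mul_cancel₀ (Nat.cast_ne_zero.mpr (NeZero.ne L))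
  have hL_nonneg : (0 : ℂ) ≤ (L : ℂ)⁻¹ := inv_nonneg.mpr (Nat.cast_nonneg L)
  constructor
  · intro h k
    have := (h.conjTranspose_mul_mul_same (fourierEmbedding n k)).smul hL_nonneg
    rwa [conjTranspose_fourierEmbedding_mul_mul hV, smul_smul, hL, one_smul] at this
  · intro h
    have := (posSemidef_sum univ fun k _ =>
      (h k).mul_mul_conjTranspose_same (fourierEmbedding n k)).smul hL_nonneg
    rwa [sum_fourierEmbedding_mul_mul hV, smul_smul, hL, one_smul] at this

end Fourier

end Matrix

/-- for a block circulant `V`, the SDP constraints (realness, PSD,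
diagonal-block structure with diagonal `1/L`, and row-block sums equal to `1`) are
respectively equivalent to the Fourier-side constraints `V_k = conj (V_{L-k})`,
`V_k ⪰ 0`, `(V_k)_{ii} = 1/L`, and `(V_0)_{ij} = 1/L`, where
`V_k = Σ_m e^{2πikm/L} V^{(m)}` with `V^{(m)}_{ij} = V_{(i,0);(j,m)}`. -/
theorem stmt6 (N L : ℕ) [NeZero L]
    (V : Matrix (Fin N × ZMod L) (Fin N × ZMod L) ℂ)
    (hcirc : ∀ (i j : Fin N) (k l : ZMod L), V (i, k) (j, l) = V (i, 0) (j, l - k))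
    (Vb : ZMod L → Matrix (Fin N) (Fin N) ℂ)
    (hVb : ∀ (k : ZMod L) (i j : Fin N),
      Vb k i j = ∑ m : ZMod L,
        Complex.exp (2 * (Real.pi : ℂ) * Complex.I * (k.val : ℂ) * (m.val : ℂ) / (L : ℂ))
          * V (i, 0) (j, m)) :
    ((∀ p q : Fin N × ZMod L, (V p q).im = 0) ↔
        ∀ (k : ZMod L) (i j : Fin N), Vb k i j = (starRingEnd ℂ) (Vb (-k) i j))
      ∧ (V.PosSemidef ↔ ∀ k : ZMod L, (Vb k).PosSemidef)
      ∧ ((∀ (i : Fin N) (k l : ZMod L),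
            (k ≠ l → V (i, k) (i, l) = 0) ∧ V (i, k) (i, k) = 1 / (L : ℂ)) ↔
          ∀ (k : ZMod L) (i : Fin N), Vb k i i = 1 / (L : ℂ))
      ∧ ((∀ i j : Fin N, ∑ k : ZMod L, ∑ l : ZMod L, V (i, k) (j, l) = 1) ↔
          ∀ i j : Fin N, Vb 0 i j = 1 / (L : ℂ)) := by
  have hV : V.IsBlockCirculant := hcirc
  have hVb_eq : Vb = fourierBlock V := by
    ext k i j
    simp only [hVb, fourierBlock_apply, stdAddChar_mul_val]
  subst hVb_eq
  refine ⟨?_, hV.posSemidef_iff, ?_, ?_⟩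
  · rw [hV.forall_iff (fun z => z.im = 0)]
    simp only [starRingEnd_apply, fourierBlock_eq_star_neg_iff, ← Complex.conj_eq_iff_im]
  · rw [hV.diag_iff, fourierBlock_diag_iff]
  · refine forall₂_congr fun i j => ?_
    rw [hV.sum_sum_eq, fourierBlock_zero_apply, nsmul_eq_mul, mul_comm,
      eq_div_iff (Nat.cast_ne_zero.mpr (NeZero.ne L))]
end

section
/- Let V ∈ ℝ^{NL×NL} maximize tr(CV) subject to: V ⪰ 0, V_{(i,k);(i,l)} = 0 for k ≠ l, and Σ_k V_{(i,k);(i,k)} = 1 for each i, where C_{(i,k);(j,l)} = ⟨R_{-k}y_i, R_{-l}y_j⟩ and the Fourier transforms F(y_i,k) are all nonzero. Then the maximum value of tr(CV) equals (1/L) Σ_{k∈ℤ_L} Σ_{i,j∈[N]} |F(y_i,k)| |F(y_j,k)| · L = Σ_k (Σ_i |F(y_i,k)|·√L)² / L, attained by the matrix whose Fourier blocks are V_k with (V_k)_{ij} = (1/L) · F(y_i,k) conj(F(y_j,k)) / |F(y_i,k) conj(F(y_j,k))|. -/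
/-!
Write `e_m(k) = exp(2πi mk/L)` and `w_m(i,k) = F(yᵢ,m) e_m(k)`. The autocorrelation identity gives
`C = Σ_m w_m w_mᴴ`, hence `tr(CV) = Σ_m w_mᴴ V w_m`. For feasible `V` the `i`-th block of `w_m` has
`V`-seminorm `|F(yᵢ,m)|`, because `V` is diagonal on diagonal blocks with unit block traces; the
triangle inequality for this seminorm then bounds `w_mᴴ V w_m` by `(Σᵢ |F(yᵢ,m)|)²`.
The bound is attained by the real part of `Σ_m v_m v_mᴴ` with `v_m(i,k) = L⁻¹ φ_{i,m} e_m(k)`,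
`φ = F/|F|`: since `|φ| = 1` its diagonal blocks are `L⁻¹ I`, and by orthogonality of characters
`v_{m'}ᴴ w_m = δ_{m m'} Σᵢ |F(yᵢ,m)|`.
-/

open Finset

/-- Feasibility for the alignment SDP without entrywise positivity constraints:
`V ⪰ 0`, `V_{(i,k);(i,l)} = 0` for `k ≠ l`, and `Σ_k V_{(i,k);(i,k)} = 1`. -/
def Feas (N L : ℕ) [NeZero L]
    (V : Matrix (Fin N × ZMod L) (Fin N × ZMod L) ℝ) : Prop :=
  V.PosSemidef ∧ (∀ (i : Fin N) (k l : ZMod L), k ≠ l → V (i, k) (i, l) = 0)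
    ∧ ∀ i : Fin N, ∑ k : ZMod L, V (i, k) (i, k) = 1

open Matrix ComplexConjugate ZMod
open scoped ComplexOrder

namespace Matrix

variable {n : Type*} [Fintype n]

lemma PosSemidef.sqrt_re_dotProduct_mulVec_sum_le {𝕜 ι : Type*} [RCLike 𝕜]
    {M : Matrix n n 𝕜} (hM : M.PosSemidef) (s : Finset ι) (x : ι → n → 𝕜) :
    √(RCLike.re (star (∑ i ∈ s, x i) ⬝ᵥ M *ᵥ ∑ i ∈ s, x i))
      ≤ ∑ i ∈ s, √(RCLike.re (star (x i) ⬝ᵥ M *ᵥ x i)) := by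
  have hnorm (v : n → 𝕜) : √(RCLike.re (star v ⬝ᵥ M *ᵥ v)) =
      @norm _ (M.toSeminormedAddCommGroup hM).toNorm v := by
    rw [@norm_eq_sqrt_re_inner 𝕜 _ _ (M.toSeminormedAddCommGroup hM) (M.toInnerProductSpace hM),
      dotProduct_comm]
    rfl
  simpa only [hnorm] using @norm_sum_le _ _ (M.toSeminormedAddCommGroup hM) s x

lemma PosSemidef.map_ofReal {V : Matrix n n ℝ} (hV : V.PosSemidef) :
    (V.map Complex.ofReal).PosSemidef := by
  classical
  open scoped MatrixOrder in
  obtain ⟨A, rfl⟩ := CStarAlgebra.nonneg_iff_eq_star_mul_self.mp hV.nonneg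
  have h : (Aᴴ * A).map Complex.ofReal = (A.map Complex.ofReal)ᴴ * A.map Complex.ofReal := by
    rw [← conjTranspose_map _ (fun r => by simp)]
    exact Matrix.map_mul (f := Complex.ofRealHom)
  rw [star_eq_conjTranspose, h]
  exact posSemidef_conjTranspose_mul_self _

lemma PosSemidef.map_re {M : Matrix n n ℂ} (hM : M.PosSemidef) :
    (M.map Complex.re).PosSemidef := by
  refine .of_dotProduct_mulVec_nonneg ?_ fun x => ?_
  · ext p q
    simp [← hM.isHermitian.apply p q]
  · have hquad : star x ⬝ᵥ M.map Complex.re *ᵥ x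
        = (star (fun p => (x p : ℂ)) ⬝ᵥ M *ᵥ fun p => (x p : ℂ)).re := by
      simp [dotProduct, mulVec, Complex.re_sum, Finset.mul_sum]
    rw [hquad]
    exact (Complex.nonneg_iff.mp (hM.dotProduct_mulVec_nonneg _)).1

lemma trace_mul_map_re (C : Matrix n n ℝ) (W : Matrix n n ℂ) :
    (C * W.map Complex.re).trace = ((C.map Complex.ofReal * W).trace).re := by
  simp [trace, mul_apply, Complex.re_sum]

lemma trace_vecMulVec_star_mul {R : Type*} [CommSemiring R] [StarRing R] (w : n → R)
    (V : Matrix n n R) : (vecMulVec w (star w) * V).trace = star w ⬝ᵥ V *ᵥ w := by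
  rw [vecMulVec_mul, trace_vecMulVec, dotProduct_comm, dotProduct_mulVec]

lemma star_dotProduct_vecMulVec_star_mulVec (v w : n → ℂ) :
    star w ⬝ᵥ vecMulVec v (star v) *ᵥ w = Complex.normSq (star v ⬝ᵥ w) := by
  rw [vecMulVec_mulVec, dotProduct_comm, ← Complex.mul_conj, op_smul_eq_smul, smul_dotProduct,
    smul_eq_mul, dotProduct_star, dotProduct_comm w]
  rfl

end Matrix

section Fourier

variable {L : ℕ} [NeZero L]

lemma ZMod.sum_stdAddChar_mul (d : ZMod L) :
    ∑ m : ZMod L, stdAddChar (m * d) = if d = 0 then (L : ℂ) else 0 := by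
  split_ifs with hd
  · simp [hd]
  · simp_rw [mul_comm _ d, ← AddChar.mulShift_apply]
    rw [AddChar.sum_eq_zero_iff_ne_zero, ← AddChar.one_eq_zero]
    exact isPrimitive_stdAddChar L hd

lemma dftR_eq_sum (x : ZMod L → ℝ) (k : ZMod L) :
    dftR x k = (√L : ℂ)⁻¹ * ∑ j, (x j : ℂ) * stdAddChar (-(j * k)) := by
  rw [dftR, one_div]
  congr 2 with j
  have h : (-(j * k) : ZMod L) = ((-(j.val * k.val : ℤ) : ℤ) : ZMod L) := by
    push_cast
    rw [ZMod.natCast_zmod_val, ZMod.natCast_zmod_val]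
  rw [h, stdAddChar_coe]
  push_cast
  ring_nf

lemma sum_dftR_mul_conj_dftR (x z : ZMod L → ℝ) (k l : ZMod L) :
    ∑ m, dftR x m * conj (dftR z m) * stdAddChar (m * (k - l))
      = ∑ t, ((x (t + k) * z (t + l) : ℝ) : ℂ) := by
  have hnorm : (√L : ℂ)⁻¹ * conj ((√L : ℂ)⁻¹) = (L : ℂ)⁻¹ := by
    rw [map_inv₀, Complex.conj_ofReal, ← mul_inv, ← Complex.ofReal_mul,
      Real.mul_self_sqrt (Nat.cast_nonneg L), Complex.ofReal_natCast]
  have hterm (m : ZMod L) : dftR x m * conj (dftR z m) * stdAddChar (m * (k - l))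
      = (L : ℂ)⁻¹ * ∑ s, ∑ s', (x s : ℂ) * z s' * stdAddChar (m * (s' - s + (k - l))) := by
    rw [dftR_eq_sum, dftR_eq_sum, map_mul, map_sum, mul_mul_mul_comm, hnorm, Finset.sum_mul_sum,
      mul_assoc, Finset.sum_mul]
    congr 1
    refine sum_congr rfl fun s _ => ?_
    rw [Finset.sum_mul]
    refine sum_congr rfl fun s' _ => ?_
    have : m * (s' - s + (k - l)) = -(s * m) + s' * m + m * (k - l) := by ring
    rw [this, AddChar.map_add_eq_mul, AddChar.map_add_eq_mul, map_mul, Complex.conj_ofReal,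
      ← AddChar.map_neg_eq_conj, neg_neg]
    ring
  calc ∑ m, dftR x m * conj (dftR z m) * stdAddChar (m * (k - l))
      = (L : ℂ)⁻¹ * ∑ s, ∑ s', (x s : ℂ) * z s' * ∑ m, stdAddChar (m * (s' - s + (k - l))) := by
        simp only [hterm, ← Finset.mul_sum]
        congr 1
        rw [Finset.sum_comm]
        refine sum_congr rfl fun s _ => ?_
        rw [Finset.sum_comm]
        simp only [Finset.mul_sum]
    _ = ∑ s, (x s : ℂ) * z (s - k + l) := by
        have hL : (L : ℂ) ≠ 0 := NeZero.ne _
        have hcond (s s' : ZMod L) : s' - s + (k - l) = 0 ↔ s' = s - k + l := by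
          constructor <;> intro h <;> linear_combination h
        simp_rw [sum_stdAddChar_mul, hcond, mul_ite, mul_zero, Finset.sum_ite_eq', Finset.mem_univ,
          if_true, Finset.mul_sum]
        refine sum_congr rfl fun s _ => ?_
        field_simp
    _ = _ := by
        refine Fintype.sum_equiv (Equiv.subRight k) _ _ fun t => ?_
        simp

variable {ι : Type*}

noncomputable def fourierVec (a : ι → ZMod L → ℂ) (m : ZMod L) : ι × ZMod L → ℂ :=
  fun p => a p.1 m * stdAddChar (m * p.2)

lemma fourierVec_mul_conj (a b : ι → ZMod L → ℂ) (m : ZMod L) (p q : ι × ZMod L) :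
    fourierVec a m p * conj (fourierVec b m q)
      = a p.1 m * conj (b q.1 m) * stdAddChar (m * (p.2 - q.2)) := by
  have h : m * (p.2 - q.2) = m * p.2 + -(m * q.2) := by ring
  rw [h, AddChar.map_add_eq_mul, AddChar.map_neg_eq_conj, fourierVec, fourierVec,
    map_mul (starRingEnd ℂ)]
  ring

variable [Fintype ι]

lemma star_fourierVec_dotProduct_fourierVec (a b : ι → ZMod L → ℂ) (m m' : ZMod L) :
    star (fourierVec b m') ⬝ᵥ fourierVec a m
      = if m = m' then L * ∑ i, conj (b i m) * a i m else 0 := by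
  have h (i : ι) (k : ZMod L) : star (fourierVec b m') (i, k) * fourierVec a m (i, k)
      = conj (b i m') * a i m * stdAddChar (k * (m - m')) := by
    have h' : k * (m - m') = -(m' * k) + m * k := by ring
    rw [h', AddChar.map_add_eq_mul, AddChar.map_neg_eq_conj, Pi.star_apply, fourierVec,
      fourierVec, Complex.star_def, map_mul (starRingEnd ℂ)]
    ring
  simp_rw [dotProduct, Fintype.sum_prod_type, h, ← Finset.mul_sum, sum_stdAddChar_mul,
    sub_eq_zero]
  split_ifs with hm
  · subst hm
    rw [Finset.mul_sum]
    exact sum_congr rfl fun i _ => mul_comm _ _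
  · simp

lemma fourierVec_eq_sum_single [DecidableEq ι] (a : ι → ZMod L → ℂ) (m : ZMod L) :
    fourierVec a m = ∑ i, fourierVec (Pi.single i (a i)) m := by
  ext p
  simp [fourierVec, Finset.sum_apply, Pi.single_apply, ite_apply]

lemma star_fourierVec_single_dotProduct_mulVec [DecidableEq ι]
    (V : Matrix (ι × ZMod L) (ι × ZMod L) ℂ) (i : ι)
    (hV : ∀ k l, k ≠ l → V (i, k) (i, l) = 0) (c : ZMod L → ℂ) (m : ZMod L) :
    star (fourierVec (Pi.single i c) m) ⬝ᵥ V *ᵥ fourierVec (Pi.single i c) m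
      = ‖c m‖ ^ 2 * ∑ k, V (i, k) (i, k) := by
  have hx (p : ι × ZMod L) : fourierVec (Pi.single i c) m p
      = if p.1 = i then c m * stdAddChar (m * p.2) else 0 := by
    simp [fourierVec, Pi.single_apply, ite_apply]
  have hrow (k : ZMod L) : (V *ᵥ fourierVec (Pi.single i c) m) (i, k)
      = V (i, k) (i, k) * (c m * stdAddChar (m * k)) := by
    rw [mulVec, dotProduct, Fintype.sum_prod_type,
      Finset.sum_eq_single i (fun j _ hj => by simp [hx, hj]) (by simp),
      Finset.sum_eq_single k (fun l _ hlk => by rw [hV k l (Ne.symm hlk), zero_mul]) (by simp),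
      hx, if_pos rfl]
  rw [dotProduct, Fintype.sum_prod_type, Finset.sum_eq_single i (fun j _ hj => by simp [hx, hj])
    (by simp), Finset.mul_sum]
  refine sum_congr rfl fun k _ => ?_
  rw [Pi.star_apply, hx, if_pos rfl, hrow, Complex.star_def, map_mul,
    show ∀ a b v : ℂ, conj a * conj b * (v * (a * b)) = v * (conj a * a) * (conj b * b) by
      intros; ring,
    Complex.conj_mul', Complex.conj_mul', AddChar.norm_apply]
  push_cast
  ring

end Fourier

section Alignment

variable {L : ℕ} [NeZero L] {ι : Type*}

def corrMatrix (y : ι → ZMod L → ℝ) : Matrix (ι × ZMod L) (ι × ZMod L) ℝ :=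
  Matrix.of fun p q => ∑ t, y p.1 (t + p.2) * y q.1 (t + q.2)

lemma corrMatrix_map_ofReal (y : ι → ZMod L → ℝ) :
    (corrMatrix y).map Complex.ofReal = ∑ m, vecMulVec (fourierVec (fun i => dftR (y i)) m)
      (star (fourierVec (fun i => dftR (y i)) m)) := by
  ext p q
  simp only [map_apply, corrMatrix, of_apply, Matrix.sum_apply, vecMulVec_apply, Pi.star_apply,
    Complex.star_def, fourierVec_mul_conj, sum_dftR_mul_conj_dftR]
  push_cast
  rfl

noncomputable def phaseCoeff (y : ι → ZMod L → ℝ) (i : ι) (m : ZMod L) : ℂ :=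
  dftR (y i) m / (L * ‖dftR (y i) m‖)

-- Back-transform of the paper's optimal Fourier blocks `L⁻¹ φᵢ conj φⱼ`, `φᵢ = F(yᵢ,m)/|F(yᵢ,m)|`.
noncomputable def optimalSolution (y : ι → ZMod L → ℝ) : Matrix (ι × ZMod L) (ι × ZMod L) ℝ :=
  (∑ m, vecMulVec (fourierVec (phaseCoeff y) m) (star (fourierVec (phaseCoeff y) m))).map
    Complex.re

lemma norm_phaseCoeff {y : ι → ZMod L → ℝ} {i : ι} {m : ZMod L} (hF : dftR (y i) m ≠ 0) :
    ‖phaseCoeff y i m‖ = (L : ℝ)⁻¹ := by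
  have : ‖dftR (y i) m‖ ≠ 0 := norm_ne_zero_iff.mpr hF
  rw [phaseCoeff, norm_div, norm_mul, Complex.norm_natCast, Complex.norm_real, norm_norm]
  field_simp

-- Where `F(yᵢ,m) = 0`, `phaseCoeff` is `0 / 0 = 0` and both sides vanish.
lemma conj_phaseCoeff_mul_dftR (y : ι → ZMod L → ℝ) (i : ι) (m : ZMod L) :
    conj (phaseCoeff y i m) * dftR (y i) m = ‖dftR (y i) m‖ / L := by
  rcases eq_or_ne (dftR (y i) m) 0 with h | h
  · simp [h]
  have : (‖dftR (y i) m‖ : ℂ) ≠ 0 := by simpa using h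
  rw [phaseCoeff, map_div₀, div_mul_eq_mul_div, Complex.conj_mul', map_mul, Complex.conj_ofReal,
    Complex.conj_natCast]
  field_simp

lemma optimalSolution_apply_same_block {y : ι → ZMod L → ℝ}
    (hF : ∀ i m, dftR (y i) m ≠ 0) (i : ι) (k l : ZMod L) :
    optimalSolution y (i, k) (i, l) = if k = l then (L : ℝ)⁻¹ else 0 := by
  have hterm (m : ZMod L) :
      fourierVec (phaseCoeff y) m (i, k) * conj (fourierVec (phaseCoeff y) m (i, l))
        = ((L : ℂ) ^ 2)⁻¹ * stdAddChar (m * (k - l)) := by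
    rw [fourierVec_mul_conj, Complex.mul_conj', norm_phaseCoeff (hF i m)]
    push_cast
    ring
  simp only [optimalSolution, map_apply, Matrix.sum_apply, vecMulVec_apply, Pi.star_apply,
    Complex.star_def, hterm, ← Finset.mul_sum, sum_stdAddChar_mul, sub_eq_zero]
  split_ifs
  · rw [show ((L : ℂ) ^ 2)⁻¹ * L = ((L : ℝ)⁻¹ : ℝ) by push_cast; field_simp, Complex.ofReal_re]
  · simp

variable [Fintype ι]

lemma trace_corrMatrix_mul_map_re (y : ι → ZMod L → ℝ)
    (W : Matrix (ι × ZMod L) (ι × ZMod L) ℂ) :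
    (corrMatrix y * W.map Complex.re).trace = ∑ m, (star (fourierVec (fun i => dftR (y i)) m) ⬝ᵥ
      W *ᵥ fourierVec (fun i => dftR (y i)) m).re := by
  rw [trace_mul_map_re, corrMatrix_map_ofReal, Finset.sum_mul, trace_sum, Complex.re_sum]
  simp_rw [trace_vecMulVec_star_mul]

lemma trace_corrMatrix_mul_optimalSolution (y : ι → ZMod L → ℝ) :
    (corrMatrix y * optimalSolution y).trace = ∑ m, (∑ i, ‖dftR (y i) m‖) ^ 2 := by
  rw [optimalSolution, trace_corrMatrix_mul_map_re]
  refine sum_congr rfl fun m _ => ?_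
  simp_rw [Matrix.sum_mulVec, dotProduct_sum, star_dotProduct_vecMulVec_star_mulVec,
    star_fourierVec_dotProduct_fourierVec, conj_phaseCoeff_mul_dftR]
  have hL : (L : ℂ) ≠ 0 := NeZero.ne _
  rw [← Complex.ofReal_sum, Complex.ofReal_re,
    Finset.sum_eq_single m (fun m' _ h => by simp [Ne.symm h]) (by simp), if_pos rfl,
    ← Finset.sum_div, mul_div_cancel₀ _ hL, ← Complex.ofReal_sum, Complex.normSq_ofReal, sq]

variable {N : ℕ}

lemma re_star_fourierVec_dotProduct_mulVec_le {V : Matrix (Fin N × ZMod L) (Fin N × ZMod L) ℝ}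
    (hV : Feas N L V) (a : Fin N → ZMod L → ℂ) (m : ZMod L) :
    (star (fourierVec a m) ⬝ᵥ V.map Complex.ofReal *ᵥ fourierVec a m).re
      ≤ (∑ i, ‖a i m‖) ^ 2 := by
  obtain ⟨hpsd, hoff, hdiag⟩ := hV
  have hblock (i : Fin N) : (star (fourierVec (Pi.single i (a i)) m) ⬝ᵥ
      V.map Complex.ofReal *ᵥ fourierVec (Pi.single i (a i)) m).re = ‖a i m‖ ^ 2 := by
    rw [star_fourierVec_single_dotProduct_mulVec _ i (fun k l hkl => by simp [hoff i k l hkl])]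
    simp only [map_apply, ← Complex.ofReal_sum, hdiag i, Complex.ofReal_one, mul_one]
    norm_cast
  have h := hpsd.map_ofReal.sqrt_re_dotProduct_mulVec_sum_le univ
    fun i => fourierVec (Pi.single i (a i)) m
  simp only [← fourierVec_eq_sum_single, RCLike.re_to_complex, hblock,
    Real.sqrt_sq (norm_nonneg _)] at h
  exact (Real.sqrt_le_left (by positivity)).mp h

lemma trace_corrMatrix_mul_le (y : Fin N → ZMod L → ℝ)
    {V : Matrix (Fin N × ZMod L) (Fin N × ZMod L) ℝ} (hV : Feas N L V) :
    (corrMatrix y * V).trace ≤ ∑ m, (∑ i, ‖dftR (y i) m‖) ^ 2 := by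
  have hV' : V = (V.map Complex.ofReal).map Complex.re := by ext; simp
  rw [hV', trace_corrMatrix_mul_map_re]
  exact sum_le_sum fun m _ => re_star_fourierVec_dotProduct_mulVec_le hV _ m

lemma feas_optimalSolution {y : Fin N → ZMod L → ℝ} (hF : ∀ i m, dftR (y i) m ≠ 0) :
    Feas N L (optimalSolution y) := by
  refine ⟨(posSemidef_sum _ fun m _ => posSemidef_vecMulVec_self_star _).map_re,
    fun i k l hkl => by rw [optimalSolution_apply_same_block hF, if_neg hkl], fun i => ?_⟩
  simp [optimalSolution_apply_same_block hF]

end Alignment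

/-- if all Fourier coefficients `F(yᵢ,k)` are nonzero, the maximum of
`tr(CV)` over the feasible set equals `Σ_k (Σ_i |F(yᵢ,k)|·√L)² / L`, and this value
is attained. -/
theorem stmt7 (N L : ℕ) [NeZero L] (y : Fin N → ZMod L → ℝ)
    (C : Matrix (Fin N × ZMod L) (Fin N × ZMod L) ℝ)
    (hC : ∀ (i j : Fin N) (k l : ZMod L),
      C (i, k) (j, l) = ∑ t : ZMod L, y i (t + k) * y j (t + l))
    (hF : ∀ (i : Fin N) (k : ZMod L), dftR (y i) k ≠ 0)
    (V : Matrix (Fin N × ZMod L) (Fin N × ZMod L) ℝ)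
    (hfeas : Feas N L V)
    (hopt : ∀ W, Feas N L W → (C * W).trace ≤ (C * V).trace) :
    (C * V).trace =
        ∑ k : ZMod L, (∑ i : Fin N, ‖dftR (y i) k‖ * Real.sqrt L) ^ 2 / L
      ∧ ∃ W, Feas N L W ∧ (C * W).trace =
        ∑ k : ZMod L, (∑ i : Fin N, ‖dftR (y i) k‖ * Real.sqrt L) ^ 2 / L := by
  obtain rfl : C = corrMatrix y := Matrix.ext fun ⟨i, k⟩ ⟨j, l⟩ => hC i j k l
  have hvalue : ∑ k : ZMod L, (∑ i : Fin N, ‖dftR (y i) k‖ * Real.sqrt L) ^ 2 / L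
      = ∑ k : ZMod L, (∑ i : Fin N, ‖dftR (y i) k‖) ^ 2 := by
    refine sum_congr rfl fun k _ => ?_
    have hL : (L : ℝ) ≠ 0 := NeZero.ne _
    rw [← Finset.sum_mul, mul_pow, Real.sq_sqrt (Nat.cast_nonneg L), mul_div_cancel_right₀ _ hL]
  have hW := feas_optimalSolution hF
  have hval := trace_corrMatrix_mul_optimalSolution y
  rw [hvalue]
  exact ⟨le_antisymm (trace_corrMatrix_mul_le y hfeas) (hval ▸ hopt _ hW), _, hW, hval⟩
end

section
/- Let Z be a chi-squared random variable with d degrees of freedom (sum of squares of d i.i.d. standard Gaussians). Then for every t > 0, Pr( Z ≥ d + 2√(dt) + 2t ) ≤ e^{−t}. -/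
/-!
Chernoff's bound with the moment generating function `E e^{lZ} = (1 - 2l)^{-d/2}` of the
chi-squared variable, taken at `l = (a - d) / (2a)` for the threshold `a = d + 2√(dt) + 2t`, gives
`Pr(Z ≥ a) ≤ e^{-(a-d)/2} (a/d)^{d/2}`. With `s = √(t/d)` one has `a/d = 1 + 2s + 2s² ≤ e^{2s}`,
so the bound is at most `e^{-(√(dt) + t)} e^{ds} = e^{-t}`.
-/

open Finset MeasureTheory ProbabilityTheory Real

section StandardGaussian

variable {l : ℝ}

lemma gaussianPDFReal_mul_exp_mul_sq (l x : ℝ) :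
    gaussianPDFReal 0 1 x * exp (l * x ^ 2) = (√(2 * π))⁻¹ * exp (-(1 / 2 - l) * x ^ 2) := by
  simp only [gaussianPDFReal, NNReal.coe_one, mul_one, sub_zero]
  rw [mul_assoc, ← exp_add]
  ring_nf

lemma integrable_exp_mul_sq_gaussianReal (hl : l < 1 / 2) :
    Integrable (fun x ↦ exp (l * x ^ 2)) (gaussianReal 0 1) := by
  rw [gaussianReal_of_var_ne_zero _ one_ne_zero,
    integrable_withDensity_iff (measurable_gaussianPDF 0 1)
      (ae_of_all _ fun _ ↦ gaussianPDF_lt_top)]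
  simp_rw [toReal_gaussianPDF, mul_comm (exp _), gaussianPDFReal_mul_exp_mul_sq]
  exact (integrable_exp_neg_mul_sq (by linarith)).const_mul _

lemma integral_exp_mul_sq_gaussianReal (hl : l < 1 / 2) :
    ∫ x, exp (l * x ^ 2) ∂gaussianReal 0 1 = (√(1 - 2 * l))⁻¹ := by
  simp_rw [integral_gaussianReal_eq_integral_smul one_ne_zero, smul_eq_mul,
    gaussianPDFReal_mul_exp_mul_sq, integral_const_mul, integral_gaussian]
  have hl' : 0 < 1 / 2 - l := by linarith
  rw [show 1 - 2 * l = 2 * (1 / 2 - l) by ring, sqrt_div pi_pos.le, sqrt_mul zero_le_two,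
    sqrt_mul zero_le_two]
  field_simp

end StandardGaussian

section ProductGaussian

variable {ι : Type*} [Fintype ι] {l : ℝ}

lemma exp_mul_sum_sq_eq_prod (l : ℝ) (g : ι → ℝ) :
    exp (l * ∑ i, g i ^ 2) = ∏ i, exp (l * g i ^ 2) := by
  rw [mul_sum, exp_sum]

lemma integrable_exp_mul_sum_sq_pi_gaussianReal (hl : l < 1 / 2) :
    Integrable (fun g : ι → ℝ ↦ exp (l * ∑ i, g i ^ 2))
      (Measure.pi fun _ ↦ gaussianReal 0 1) := by
  simp_rw [exp_mul_sum_sq_eq_prod]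
  exact Integrable.fintype_prod fun _ ↦ integrable_exp_mul_sq_gaussianReal hl

lemma mgf_sum_sq_pi_gaussianReal (hl : l < 1 / 2) :
    mgf (fun g : ι → ℝ ↦ ∑ i, g i ^ 2) (Measure.pi fun _ ↦ gaussianReal 0 1) l
      = (√(1 - 2 * l))⁻¹ ^ Fintype.card ι := by
  simp_rw [mgf, exp_mul_sum_sq_eq_prod]
  rw [integral_fintype_prod_eq_pow (fun x ↦ exp (l * x ^ 2)), integral_exp_mul_sq_gaussianReal hl]

lemma measureReal_sum_sq_ge_le_exp_mul_sqrt_pow {a : ℝ} (hι : 0 < Fintype.card ι)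
    (ha : Fintype.card ι ≤ a) :
    (Measure.pi fun _ : ι ↦ gaussianReal 0 1).real {g | a ≤ ∑ i, g i ^ 2}
      ≤ exp (-((a - Fintype.card ι) / 2)) * √(a / Fintype.card ι) ^ Fintype.card ι := by
  set n : ℝ := (Fintype.card ι : ℝ)
  have hn : 0 < n := Nat.cast_pos.mpr hι
  have ha0 : 0 < a := hn.trans_le ha
  set l := (a - n) / (2 * a) with hl_def
  have hl0 : 0 ≤ l := div_nonneg (by linarith) (by positivity)
  have hl : l < 1 / 2 := by rw [div_lt_iff₀ (by positivity)]; linarith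
  have h1l : 1 - 2 * l = n / a := by rw [hl_def]; field_simp; ring
  have hla : -l * a = -((a - n) / 2) := by rw [hl_def]; field_simp
  have := measure_ge_le_exp_mul_mgf a hl0
    (integrable_exp_mul_sum_sq_pi_gaussianReal (ι := ι) hl)
  rwa [mgf_sum_sq_pi_gaussianReal hl, hla, h1l, ← sqrt_inv, inv_div] at this

end ProductGaussian

lemma sqrt_one_add_two_mul_add_two_mul_sq_le_exp {s : ℝ} (hs : 0 ≤ s) :
    √(1 + 2 * s + 2 * s ^ 2) ≤ exp s := by
  rw [sqrt_le_left (exp_pos s).le, ← exp_nat_mul]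
  convert quadratic_le_exp_of_nonneg (mul_nonneg zero_le_two hs) using 1 <;> push_cast <;> ring

lemma sqrt_div_pow_le_exp_sqrt_mul {n : ℕ} {t : ℝ} (hn : 0 < n) (ht : 0 ≤ t) :
    √((n + 2 * √(n * t) + 2 * t) / n) ^ n ≤ exp √(n * t) := by
  have hn' : (0 : ℝ) < n := by exact_mod_cast hn
  set s := √(t / n)
  have hs : 0 ≤ s := sqrt_nonneg _
  have hns : √(n * t) = n * s := by
    rw [show (n : ℝ) * t = n ^ 2 * (t / n) by field_simp, sqrt_mul (sq_nonneg _), sqrt_sq hn'.le]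
  have hratio : (n + 2 * √(n * t) + 2 * t) / n = 1 + 2 * s + 2 * s ^ 2 := by
    rw [hns, sq_sqrt (by positivity)]; field_simp
  rw [hratio, hns, exp_nat_mul]
  gcongr
  exact sqrt_one_add_two_mul_add_two_mul_sq_le_exp hs

/-- Laurent–Massart: if `Z = Σ_{i<d} gᵢ²` for i.i.d. standard
Gaussians, then `Pr(Z ≥ d + 2√(dt) + 2t) ≤ e^{−t}` for every `t > 0`. -/
theorem stmt13 (d : ℕ) :
    ∀ t : ℝ, 0 < t →
      (Measure.pi fun _ : Fin d => gaussianReal 0 1)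
        {g : Fin d → ℝ |
          (d : ℝ) + 2 * Real.sqrt (d * t) + 2 * t ≤ ∑ i : Fin d, g i ^ 2} ≤
        ENNReal.ofReal (Real.exp (-t)) := by
  intro t ht
  rcases Nat.eq_zero_or_pos d with rfl | hd
  · simp [show ¬ 2 * t ≤ 0 by linarith]
  set a := (d : ℝ) + 2 * √(d * t) + 2 * t
  have hda : (d : ℝ) ≤ a := by have := sqrt_nonneg (d * t); linarith
  have hchernoff := measureReal_sum_sq_ge_le_exp_mul_sqrt_pow (ι := Fin d) (by simpa using hd)
    (by simpa using hda)
  simp only [Fintype.card_fin] at hchernoff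
  rw [← ofReal_measureReal]
  refine ENNReal.ofReal_le_ofReal (hchernoff.trans ?_)
  calc exp (-((a - d) / 2)) * √(a / d) ^ d
      ≤ exp (-((a - d) / 2)) * exp √(d * t) := by
        gcongr; exact sqrt_div_pow_le_exp_sqrt_mul hd ht.le
    _ = exp (-t) := by rw [← exp_add]; congr 1; ring
end
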